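/- With perturbed unit-direction precoder v̂/‖v̂‖ and combiner û/‖û‖ where û = u + Δu, v̂ = v + Δv, and where Δu* u = 0, Δv* v = 0, u* H Δv = 0, Δu* H v = 0, Δu* H Δv = 0 for the rank-one channel H = √(N_R N_T) α u v*, the received signal is y = (√(N_R N_T) α s)/(‖û‖‖v̂‖) + (û*/‖û‖) n, so the average SNR equals N_R N_T P σ_α² / (K σ_n² ‖û‖² ‖v̂‖²), and the SNR loss relative to perfect covariance is γ = ‖û‖² ‖v̂‖². -/

import Mathlib

open scoped BigOperators Matrix
open MeasureTheory ProbabilityTheory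

/-- Euclidean norm of a complex vector. -/
noncomputable def vnorm {n : ℕ} (v : Fin n → ℂ) : ℝ := Real.sqrt (∑ i, ‖v i‖ ^ 2)

/-!
Since `Δu ⊥ u` and `Δv ⊥ v`, the perturbed beamformers still see the rank-one channel with unit
gain: `û* (u v*) v̂ = (û* u)(v* v̂) = 1`, so after normalisation the effective channel is
`√(N_R N_T) α / (‖û‖ ‖v̂‖)`. Independence of `α` and `s` makes the signal power
`N_R N_T σ_α² (P / K) / (‖û‖² ‖v̂‖²)`, while white noise projected onto the unit vector `û / ‖û‖`
keeps power `σ_n²`. Dividing gives the SNR, and comparing with the perfect-covariance SNR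
`N_R N_T P σ_α² / (K σ_n²)` gives the loss `‖û‖² ‖v̂‖²`.
-/

open Matrix

section DotProduct

variable {ι κ : Type*} [Fintype ι] [Fintype κ]

lemma star_dotProduct_self_eq_sum_norm_sq (w : ι → ℂ) :
    star w ⬝ᵥ w = ((∑ i, ‖w i‖ ^ 2 : ℝ) : ℂ) := by
  push_cast
  exact Finset.sum_congr rfl fun i _ => Complex.conj_mul' (w i)

lemma star_dotProduct_self_eq_one {w : ι → ℂ} (h : ∑ i, ‖w i‖ ^ 2 = 1) : star w ⬝ᵥ w = 1 := by
  rw [star_dotProduct_self_eq_sum_norm_sq, h, Complex.ofReal_one]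

lemma star_add_dotProduct_of_orthogonal {w Δ : ι → ℂ} (h : star Δ ⬝ᵥ w = 0) :
    star (w + Δ) ⬝ᵥ w = star w ⬝ᵥ w := by
  rw [star_add, add_dotProduct, h, add_zero]

lemma star_dotProduct_add_of_orthogonal {w Δ : ι → ℂ} (h : star Δ ⬝ᵥ w = 0) :
    star w ⬝ᵥ (w + Δ) = star w ⬝ᵥ w := by
  rw [dotProduct_add, star_dotProduct (v := w) (w := Δ), h, star_zero, add_zero]

lemma dotProduct_vecMulVec_mulVec {R : Type*} [CommSemiring R] (a u : ι → R) (v b : κ → R) :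
    a ⬝ᵥ (vecMulVec u v *ᵥ b) = (a ⬝ᵥ u) * (v ⬝ᵥ b) := by
  rw [vecMulVec_mulVec, op_smul_eq_smul, dotProduct_smul, smul_eq_mul, mul_comm]

lemma star_add_dotProduct_vecMulVec_mulVec_add {u Δu : ι → ℂ} {v Δv : κ → ℂ}
    (hu : star u ⬝ᵥ u = 1) (hv : star v ⬝ᵥ v = 1)
    (hΔu : star Δu ⬝ᵥ u = 0) (hΔv : star Δv ⬝ᵥ v = 0) :
    star (u + Δu) ⬝ᵥ (vecMulVec u (star v) *ᵥ (v + Δv)) = 1 := by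
  rw [dotProduct_vecMulVec_mulVec, star_add_dotProduct_of_orthogonal hΔu,
    star_dotProduct_add_of_orthogonal hΔv, hu, hv, mul_one]

end DotProduct

lemma vnorm_sq {m : ℕ} (w : Fin m → ℂ) : vnorm w ^ 2 = ∑ i, ‖w i‖ ^ 2 :=
  Real.sq_sqrt (by positivity)

lemma vnorm_ne_zero {m : ℕ} {w : Fin m → ℂ} (hw : w ≠ 0) : vnorm w ≠ 0 := by
  intro h
  have hsum : ∑ i, ‖w i‖ ^ 2 = 0 := by rw [← vnorm_sq, h, sq, mul_zero]
  refine hw (funext fun i => ?_)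
  simpa using (Finset.sum_eq_zero_iff_of_nonneg fun i _ => by positivity).1 hsum i
    (Finset.mem_univ i)

section Expectation

variable {Ω : Type*} [MeasurableSpace Ω] {μ : Measure Ω}

lemma integral_norm_const_mul_sq {𝕜 : Type*} [NormedDivisionRing 𝕜] (c : 𝕜) (f : Ω → 𝕜) :
    ∫ ω, ‖c * f ω‖ ^ 2 ∂μ = ‖c‖ ^ 2 * ∫ ω, ‖f ω‖ ^ 2 ∂μ := by
  simp_rw [norm_mul, mul_pow]
  exact integral_const_mul _ _

lemma ProbabilityTheory.IndepFun.integral_norm_mul_sq {α s : Ω → ℂ} (h : IndepFun α s μ)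
    (hα : AEStronglyMeasurable (fun ω => ‖α ω‖ ^ 2) μ)
    (hs : AEStronglyMeasurable (fun ω => ‖s ω‖ ^ 2) μ) :
    ∫ ω, ‖α ω * s ω‖ ^ 2 ∂μ = (∫ ω, ‖α ω‖ ^ 2 ∂μ) * ∫ ω, ‖s ω‖ ^ 2 ∂μ := by
  simp_rw [norm_mul, mul_pow]
  exact (h.comp (measurable_norm.pow_const 2) (measurable_norm.pow_const 2))
    |>.integral_fun_mul_eq_mul_integral hα hs

lemma integral_norm_sq_star_dotProduct_of_white {ι : Type*} [Fintype ι] [DecidableEq ι]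
    {n : Ω → ι → ℂ} {σ : ℝ} (hint : ∀ i j, Integrable (fun ω => n ω i * star (n ω j)) μ)
    (hcov : ∀ i j, ∫ ω, n ω i * star (n ω j) ∂μ = if i = j then (σ : ℂ) else 0) (a : ι → ℂ) :
    ∫ ω, ‖star a ⬝ᵥ n ω‖ ^ 2 ∂μ = σ * ∑ i, ‖a i‖ ^ 2 := by
  have hexpand : ∀ ω, ((‖star a ⬝ᵥ n ω‖ ^ 2 : ℝ) : ℂ) =
      ∑ i, ∑ j, (star (a i) * a j) * (n ω i * star (n ω j)) := by
    intro ω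
    rw [Complex.ofReal_pow, ← Complex.mul_conj', dotProduct, Complex.star_def.symm, star_sum,
      Finset.sum_mul_sum]
    refine Finset.sum_congr rfl fun i _ => Finset.sum_congr rfl fun j _ => ?_
    simp only [Pi.star_apply, star_mul', star_star]
    ring
  apply Complex.ofReal_injective
  rw [← integral_complex_ofReal, integral_congr_ae (ae_of_all _ hexpand),
    integral_finsetSum _ fun i _ => integrable_finsetSum _ fun j _ => (hint i j).const_mul _]
  calc ∑ i, ∫ ω, ∑ j, (star (a i) * a j) * (n ω i * star (n ω j)) ∂μ
      = ∑ i, ∑ j, (star (a i) * a j) * if i = j then (σ : ℂ) else 0 := by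
        refine Finset.sum_congr rfl fun i _ => ?_
        rw [integral_finsetSum _ fun j _ => (hint i j).const_mul _]
        simp only [integral_const_mul, hcov]
    _ = ∑ i, star (a i) * a i * σ := by simp
    _ = _ := by
        rw [← Finset.sum_mul]
        change (star a ⬝ᵥ a) * σ = _
        rw [star_dotProduct_self_eq_sum_norm_sq]
        push_cast
        ring

lemma integral_norm_sq_inv_vnorm_mul_star_dotProduct_of_white {m : ℕ} {n : Ω → Fin m → ℂ}
    {σ : ℝ} (hint : ∀ i j, Integrable (fun ω => n ω i * star (n ω j)) μ)
    (hcov : ∀ i j, ∫ ω, n ω i * star (n ω j) ∂μ = if i = j then (σ : ℂ) else 0)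
    {a : Fin m → ℂ} (ha : vnorm a ≠ 0) :
    ∫ ω, ‖((vnorm a : ℝ) : ℂ)⁻¹ * (star a ⬝ᵥ n ω)‖ ^ 2 ∂μ = σ := by
  rw [integral_norm_const_mul_sq, integral_norm_sq_star_dotProduct_of_white hint hcov, ← vnorm_sq,
    norm_inv, Complex.norm_real, Real.norm_eq_abs, inv_pow, sq_abs]
  field_simp

end Expectation

theorem stmt19_general {NR NT K : ℕ} (hNR : 0 < NR) (hNT : 0 < NT) (hK : 0 < K)
    {Ω : Type*} [MeasurableSpace Ω] (μ : Measure Ω)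
    (u : Fin NR → ℂ) (v : Fin NT → ℂ)
    (hu : ∑ i, ‖u i‖ ^ 2 = 1) (hv : ∑ i, ‖v i‖ ^ 2 = 1)
    (Δu : Fin NR → ℂ) (Δv : Fin NT → ℂ)
    (uhat : Fin NR → ℂ) (vhat : Fin NT → ℂ)
    (huhat : uhat = u + Δu) (hvhat : vhat = v + Δv)
    (hΔu : ∑ i, star (Δu i) * u i = 0) (hΔv : ∑ i, star (Δv i) * v i = 0)
    (α s : Ω → ℂ) (n : Ω → Fin NR → ℂ)
    (σα P σn : ℝ) (hσα : 0 < σα) (hP : 0 < P) (hσn : 0 < σn)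
    (hα2 : Integrable (fun ω => ‖α ω‖ ^ 2) μ)
    (hs2 : Integrable (fun ω => ‖s ω‖ ^ 2) μ)
    (hα : ∫ ω, ‖α ω‖ ^ 2 ∂μ = σα ^ 2)
    (hs : ∫ ω, ‖s ω‖ ^ 2 ∂μ = P / K)
    (hαs : IndepFun α s μ)
    (hnn_int : ∀ i j, Integrable (fun ω => n ω i * star (n ω j)) μ)
    (hnn : ∀ i j, ∫ ω, n ω i * star (n ω j) ∂μ =
      if i = j then ((σn ^ 2 : ℝ) : ℂ) else 0)
    (H : Ω → Matrix (Fin NR) (Fin NT) ℂ)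
    (hH : ∀ ω, H ω =
      ((Real.sqrt (NR * NT) : ℝ) : ℂ) • (α ω • Matrix.vecMulVec u (star v)))
    (y : Ω → ℂ)
    (hy : ∀ ω, y ω =
      (((vnorm uhat * vnorm vhat : ℝ) : ℂ))⁻¹ *
          (∑ i, star (uhat i) * ((H ω).mulVec vhat) i) * s ω +
        (((vnorm uhat : ℝ) : ℂ))⁻¹ * ∑ i, star (uhat i) * n ω i) :
    (∀ ω, y ω =
      (((vnorm uhat * vnorm vhat : ℝ) : ℂ))⁻¹ *
          (((Real.sqrt (NR * NT) : ℝ) : ℂ) * α ω * s ω) +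
        (((vnorm uhat : ℝ) : ℂ))⁻¹ * ∑ i, star (uhat i) * n ω i) ∧
    (∫ ω, ‖(((vnorm uhat * vnorm vhat : ℝ) : ℂ))⁻¹ *
          (((Real.sqrt (NR * NT) : ℝ) : ℂ) * α ω * s ω)‖ ^ 2 ∂μ) /
        (∫ ω, ‖(((vnorm uhat : ℝ) : ℂ))⁻¹ * ∑ i, star (uhat i) * n ω i‖ ^ 2 ∂μ) =
      ((NR : ℝ) * NT * P * σα ^ 2) /
        (K * σn ^ 2 * (vnorm uhat) ^ 2 * (vnorm vhat) ^ 2) ∧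
    (((NR : ℝ) * NT * P * σα ^ 2) / (K * σn ^ 2)) /
        ((∫ ω, ‖(((vnorm uhat * vnorm vhat : ℝ) : ℂ))⁻¹ *
            (((Real.sqrt (NR * NT) : ℝ) : ℂ) * α ω * s ω)‖ ^ 2 ∂μ) /
          (∫ ω, ‖(((vnorm uhat : ℝ) : ℂ))⁻¹ * ∑ i, star (uhat i) * n ω i‖ ^ 2 ∂μ)) =
      (vnorm uhat) ^ 2 * (vnorm vhat) ^ 2 := by
  set r : ℝ := Real.sqrt (NR * NT)
  have hr : r ^ 2 = (NR : ℝ) * NT := Real.sq_sqrt (by positivity)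
  have hu1 := star_dotProduct_self_eq_one hu
  have hv1 := star_dotProduct_self_eq_one hv
  have hgain : ∀ ω, ∑ i, star (uhat i) * ((H ω).mulVec vhat) i = r * α ω := fun ω => by
    change star uhat ⬝ᵥ (H ω *ᵥ vhat) = _
    rw [hH, huhat, hvhat, smul_mulVec, smul_mulVec, dotProduct_smul, dotProduct_smul,
      star_add_dotProduct_vecMulVec_mulVec_add hu1 hv1 hΔu hΔv, smul_eq_mul, smul_eq_mul, mul_one]
  have hA : vnorm uhat ≠ 0 := vnorm_ne_zero fun h0 => by
    simpa [← huhat, h0, hu1] using star_add_dotProduct_of_orthogonal hΔu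
  have hB : vnorm vhat ≠ 0 := vnorm_ne_zero fun h0 => by
    simpa [← hvhat, h0, hv1] using star_dotProduct_add_of_orthogonal hΔv
  have hsignal : ∫ ω, ‖(((vnorm uhat * vnorm vhat : ℝ) : ℂ))⁻¹ * ((r : ℂ) * α ω * s ω)‖ ^ 2 ∂μ
      = (vnorm uhat ^ 2 * vnorm vhat ^ 2)⁻¹ * (NR * NT) * (σα ^ 2 * (P / K)) := by
    simp_rw [integral_norm_const_mul_sq, mul_assoc (r : ℂ), integral_norm_const_mul_sq,
      hαs.integral_norm_mul_sq hα2.1 hs2.1, hα, hs, norm_inv, Complex.norm_real, Real.norm_eq_abs,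
      inv_pow, sq_abs, mul_pow, hr]
    ring
  have hnoise : ∫ ω, ‖((vnorm uhat : ℝ) : ℂ)⁻¹ * ∑ i, star (uhat i) * n ω i‖ ^ 2 ∂μ = σn ^ 2 :=
    integral_norm_sq_inv_vnorm_mul_star_dotProduct_of_white hnn_int hnn hA
  have hsnr : (∫ ω, ‖(((vnorm uhat * vnorm vhat : ℝ) : ℂ))⁻¹ * ((r : ℂ) * α ω * s ω)‖ ^ 2 ∂μ) /
        (∫ ω, ‖((vnorm uhat : ℝ) : ℂ)⁻¹ * ∑ i, star (uhat i) * n ω i‖ ^ 2 ∂μ) =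
      ((NR : ℝ) * NT * P * σα ^ 2) / (K * σn ^ 2 * vnorm uhat ^ 2 * vnorm vhat ^ 2) := by
    rw [hsignal, hnoise]
    field_simp
  refine ⟨fun ω => by rw [hy ω, hgain ω]; ring, hsnr, ?_⟩
  rw [hsnr]
  field_simp

theorem stmt19 {NR NT K : ℕ} (hNR : 0 < NR) (hNT : 0 < NT) (hK : 0 < K)
    {Ω : Type*} [MeasurableSpace Ω] (μ : Measure Ω) [IsProbabilityMeasure μ]
    (u : Fin NR → ℂ) (v : Fin NT → ℂ)
    (hu : ∑ i, ‖u i‖ ^ 2 = 1) (hv : ∑ i, ‖v i‖ ^ 2 = 1)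
    (Δu : Fin NR → ℂ) (Δv : Fin NT → ℂ)
    (uhat : Fin NR → ℂ) (vhat : Fin NT → ℂ)
    (huhat : uhat = u + Δu) (hvhat : vhat = v + Δv)
    (hΔu : ∑ i, star (Δu i) * u i = 0) (hΔv : ∑ i, star (Δv i) * v i = 0)
    (α s : Ω → ℂ) (n : Ω → Fin NR → ℂ)
    (σα P σn : ℝ) (hσα : 0 < σα) (hP : 0 < P) (hσn : 0 < σn)
    (hα2 : Integrable (fun ω => ‖α ω‖ ^ 2) μ)
    (hs2 : Integrable (fun ω => ‖s ω‖ ^ 2) μ)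
    (hα : ∫ ω, ‖α ω‖ ^ 2 ∂μ = σα ^ 2)
    (hs : ∫ ω, ‖s ω‖ ^ 2 ∂μ = P / K)
    (hαs : IndepFun α s μ)
    (hnn_int : ∀ i j, Integrable (fun ω => n ω i * star (n ω j)) μ)
    (hnn : ∀ i j, ∫ ω, n ω i * star (n ω j) ∂μ =
      if i = j then ((σn ^ 2 : ℝ) : ℂ) else 0)
    (H : Ω → Matrix (Fin NR) (Fin NT) ℂ)
    (hH : ∀ ω, H ω =
      ((Real.sqrt (NR * NT) : ℝ) : ℂ) • (α ω • Matrix.vecMulVec u (star v)))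
    (hc1 : ∀ ω, ∑ i, star (u i) * ((H ω).mulVec Δv) i = 0)
    (hc2 : ∀ ω, ∑ i, star (Δu i) * ((H ω).mulVec v) i = 0)
    (hc3 : ∀ ω, ∑ i, star (Δu i) * ((H ω).mulVec Δv) i = 0)
    (y : Ω → ℂ)
    (hy : ∀ ω, y ω =
      (((vnorm uhat * vnorm vhat : ℝ) : ℂ))⁻¹ *
          (∑ i, star (uhat i) * ((H ω).mulVec vhat) i) * s ω +
        (((vnorm uhat : ℝ) : ℂ))⁻¹ * ∑ i, star (uhat i) * n ω i) :
    (∀ ω, y ω =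
      (((vnorm uhat * vnorm vhat : ℝ) : ℂ))⁻¹ *
          (((Real.sqrt (NR * NT) : ℝ) : ℂ) * α ω * s ω) +
        (((vnorm uhat : ℝ) : ℂ))⁻¹ * ∑ i, star (uhat i) * n ω i) ∧
    (∫ ω, ‖(((vnorm uhat * vnorm vhat : ℝ) : ℂ))⁻¹ *
          (((Real.sqrt (NR * NT) : ℝ) : ℂ) * α ω * s ω)‖ ^ 2 ∂μ) /
        (∫ ω, ‖(((vnorm uhat : ℝ) : ℂ))⁻¹ * ∑ i, star (uhat i) * n ω i‖ ^ 2 ∂μ) =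
      ((NR : ℝ) * NT * P * σα ^ 2) /
        (K * σn ^ 2 * (vnorm uhat) ^ 2 * (vnorm vhat) ^ 2) ∧
    (((NR : ℝ) * NT * P * σα ^ 2) / (K * σn ^ 2)) /
        ((∫ ω, ‖(((vnorm uhat * vnorm vhat : ℝ) : ℂ))⁻¹ *
            (((Real.sqrt (NR * NT) : ℝ) : ℂ) * α ω * s ω)‖ ^ 2 ∂μ) /
          (∫ ω, ‖(((vnorm uhat : ℝ) : ℂ))⁻¹ * ∑ i, star (uhat i) * n ω i‖ ^ 2 ∂μ)) =
      (vnorm uhat) ^ 2 * (vnorm vhat) ^ 2 :=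
  stmt19_general hNR hNT hK μ u v hu hv Δu Δv uhat vhat huhat hvhat hΔu hΔv α s n σα P σn hσα hP hσn
    hα2 hs2 hα hs hαs hnn_int hnn H hH y hy
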